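/- Doubly robust remainder bound: let P⋆ be a distribution on 𝒳×{0,1}×𝒴 with propensity π⋆ bounded below by η > 0, and let π_n (also bounded below by η) and 𝓗-valued functions θ_n, θ⋆ : 𝒳 → 𝓗 be given, for a separable Hilbert space 𝓗. Then the Bochner integral R := E⋆[ (1 − π⋆(X)/π_n(X)) (θ_n(X) − θ⋆(X)) ] satisfies ‖R‖_𝓗 ≤ η⁻¹ ‖π_n − π⋆‖_{L²(P⋆,X)} · ‖θ_n − θ⋆‖_{L²(P⋆,X;𝓗)}. -/

import Mathlib

open MeasureTheory

section

variable {α : Type*} [MeasurableSpace α] {μ : Measure α}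

theorem memLp_two_of_integrable_sq {f : α → ℝ} (hf : 0 ≤ f)
    (h : Integrable (fun x => f x ^ 2) μ) : MemLp f 2 μ := by
  have hmeas : AEStronglyMeasurable f μ := by
    have := Real.continuous_sqrt.comp_aestronglyMeasurable h.aestronglyMeasurable
    simpa only [Function.comp_def, Real.sqrt_sq (hf _)] using this
  exact (memLp_two_iff_integrable_sq hmeas).2 h

theorem integral_mul_le_sqrt_mul_sqrt {f g : α → ℝ} (hf0 : 0 ≤ f) (hg0 : 0 ≤ g)
    (hf : MemLp f 2 μ) (hg : MemLp g 2 μ) :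
    ∫ x, f x * g x ∂μ ≤ √(∫ x, f x ^ 2 ∂μ) * √(∫ x, g x ^ 2 ∂μ) := by
  have h := integral_mul_le_Lp_mul_Lq_of_nonneg Real.HolderConjugate.two_two
    (ae_of_all _ hf0) (ae_of_all _ hg0) (by simpa using hf) (by simpa using hg)
  simpa only [Real.rpow_two, Real.sqrt_eq_rpow] using h

end

theorem abs_one_sub_div_le {η a b : ℝ} (hη : 0 < η) (hb : η ≤ b) :
    |1 - a / b| ≤ η⁻¹ * |b - a| := by
  have hb0 : 0 < b := hη.trans_le hb
  rw [one_sub_div hb0.ne', abs_div, abs_of_pos hb0, div_eq_inv_mul]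
  gcongr

theorem stmt17_general {𝒳 H : Type*} [MeasurableSpace 𝒳]
    [NormedAddCommGroup H] [InnerProductSpace ℝ H]
    (μ : Measure 𝒳)
    (η : ℝ) (hη : 0 < η)
    (πs πn : 𝒳 → ℝ) (hπn : ∀ x, η ≤ πn x)
    (θn θs : 𝒳 → H)
    (h1 : Integrable (fun x => (πn x - πs x) ^ 2) μ)
    (h2 : Integrable (fun x => ‖θn x - θs x‖ ^ 2) μ) :
    ‖∫ x, (1 - πs x / πn x) • (θn x - θs x) ∂μ‖
      ≤ η⁻¹ * Real.sqrt (∫ x, (πn x - πs x) ^ 2 ∂μ)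
          * Real.sqrt (∫ x, ‖θn x - θs x‖ ^ 2 ∂μ) := by
  have hf : MemLp (fun x => |πn x - πs x|) 2 μ :=
    memLp_two_of_integrable_sq (fun _ => abs_nonneg _) (by simpa only [sq_abs] using h1)
  have hg : MemLp (fun x => ‖θn x - θs x‖) 2 μ :=
    memLp_two_of_integrable_sq (fun _ => norm_nonneg _) h2
  have hpt : ∀ x, ‖(1 - πs x / πn x) • (θn x - θs x)‖
      ≤ η⁻¹ * (|πn x - πs x| * ‖θn x - θs x‖) := fun x => by
    rw [norm_smul, Real.norm_eq_abs, ← mul_assoc]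
    gcongr
    exact abs_one_sub_div_le hη (hπn x)
  calc ‖∫ x, (1 - πs x / πn x) • (θn x - θs x) ∂μ‖
      ≤ ∫ x, η⁻¹ * (|πn x - πs x| * ‖θn x - θs x‖) ∂μ :=
        norm_integral_le_of_norm_le ((hf.integrable_mul hg).const_mul _) (ae_of_all _ hpt)
    _ = η⁻¹ * ∫ x, |πn x - πs x| * ‖θn x - θs x‖ ∂μ := integral_const_mul _ _
    _ ≤ η⁻¹ * (√(∫ x, (πn x - πs x) ^ 2 ∂μ) * √(∫ x, ‖θn x - θs x‖ ^ 2 ∂μ)) := by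
        gcongr
        simpa only [sq_abs] using
          integral_mul_le_sqrt_mul_sqrt (fun _ => abs_nonneg _) (fun _ => norm_nonneg _) hf hg
    _ = _ := (mul_assoc _ _ _).symm

/-- **Doubly robust remainder bound.** Let `μ` be the covariate distribution, `π⋆, π_n`
propensity functions bounded below by `η > 0`, and `θ_n, θ⋆ : 𝒳 → 𝓗` Hilbert-valued
outcome models. Then the Bochner integral
`R = E[(1 − π⋆(X)/π_n(X)) (θ_n(X) − θ⋆(X))]` satisfies
`‖R‖ ≤ η⁻¹ ‖π_n − π⋆‖_{L²(μ)} ‖θ_n − θ⋆‖_{L²(μ;𝓗)}`. -/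
theorem stmt17 {𝒳 H : Type*} [MeasurableSpace 𝒳]
    [NormedAddCommGroup H] [InnerProductSpace ℝ H] [CompleteSpace H]
    (μ : Measure 𝒳) [IsProbabilityMeasure μ]
    (η : ℝ) (hη : 0 < η)
    (πs πn : 𝒳 → ℝ) (hπs : ∀ x, η ≤ πs x) (hπn : ∀ x, η ≤ πn x)
    (θn θs : 𝒳 → H)
    (h1 : Integrable (fun x => (πn x - πs x) ^ 2) μ)
    (h2 : Integrable (fun x => ‖θn x - θs x‖ ^ 2) μ)
    (h3 : Integrable (fun x => (1 - πs x / πn x) • (θn x - θs x)) μ) :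
    ‖∫ x, (1 - πs x / πn x) • (θn x - θs x) ∂μ‖
      ≤ η⁻¹ * Real.sqrt (∫ x, (πn x - πs x) ^ 2 ∂μ)
          * Real.sqrt (∫ x, ‖θn x - θs x‖ ^ 2 ∂μ) :=
  stmt17_general μ η hη πs πn hπn θn θs h1 h2
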